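/- Let 0 < θ₁ < π/2 < θ₂ < π with θ₁ ≠ π - θ₂. Then for any two nonzero vectors f₁, f₂ ∈ ℝ² not lying on the coordinate axes, there exists k ∈ ℕ such that R(kθ₁)f₁ and R(kθ₂)f₂ lie in the same open quadrant or in diametrically opposite open quadrants. -/

import Mathlib

/-!
`R(kθ₁)f₁` and `R(kθ₂)f₂` lie in the same or in opposite open quadrants iff the products
`re · im` of the two vectors have the same sign, i.e. iff
`F k = sin (2 arg f₁ + 2kθ₁) * sin (2 arg f₂ + 2kθ₂) > 0`. If `F k ≤ 0` for every `k`, then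
`F k + (F k)² ≤ 0` because `F k ≥ -1`. On the other hand `F k + (F k)² ≥ 1/8 + T k`, where `T k`
is a combination of cosines of arithmetic progressions with steps `2θ₁ - 2θ₂`, `2θ₁ + 2θ₂`,
`4θ₁ + 4θ₂`, `4θ₁`, `4θ₂`. The hypotheses make none of these steps a multiple of `2π`, so the
partial sums of `T` are bounded (they are real parts of geometric sums), and summing over
`k < N` gives `N / 8 ≤ C` for every `N`.
-/

open Real Finset

/-- `z` and `w` lie in the same open quadrant of `ℝ² ≃ ℂ` or in diametrically
opposite ones. -/
def SameOrOppositeQuadrant (z w : ℂ) : Prop :=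
  (0 < z.re * w.re ∧ 0 < z.im * w.im) ∨ (z.re * w.re < 0 ∧ z.im * w.im < 0)

theorem cos_ne_one_of_sub_int_mul_two_pi {x : ℝ} (n : ℤ) (h₁ : -(2 * π) < x - n * (2 * π))
    (h₂ : x - n * (2 * π) < 2 * π) (h₀ : x ≠ n * (2 * π)) : cos x ≠ 1 := by
  rw [← cos_sub_int_mul_two_pi x n, ne_eq, cos_eq_one_iff_of_lt_of_lt h₁ h₂, sub_eq_zero]
  exact h₀

theorem abs_sum_range_cos_add_mul_le {γ : ℝ} (hγ : cos γ ≠ 1) (c : ℝ) (N : ℕ) :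
    |∑ k ∈ range N, cos (c + k * γ)| ≤ 2 / ‖Complex.exp (γ * Complex.I) - 1‖ := by
  have hz : Complex.exp (γ * Complex.I) ≠ 1 := fun h => hγ <| by
    rw [← Complex.exp_ofReal_mul_I_re, h, Complex.one_re]
  set z := Complex.exp (γ * Complex.I)
  have hz_norm : ‖z‖ = 1 := Complex.norm_exp_ofReal_mul_I γ
  have hsum : ∑ k ∈ range N, cos (c + k * γ)
      = (Complex.exp (c * Complex.I) * ∑ k ∈ range N, z ^ k).re := by
    rw [mul_sum, Complex.re_sum]
    refine sum_congr rfl fun k _ => ?_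
    rw [← Complex.exp_nat_mul, ← Complex.exp_add, ← Complex.exp_ofReal_mul_I_re]
    push_cast
    ring_nf
  calc |∑ k ∈ range N, cos (c + k * γ)|
      ≤ ‖∑ k ∈ range N, z ^ k‖ := by
        rw [hsum]
        refine (Complex.abs_re_le_norm _).trans_eq ?_
        rw [norm_mul, Complex.norm_exp_ofReal_mul_I, one_mul]
    _ = ‖z ^ N - 1‖ / ‖z - 1‖ := by rw [geom_sum_eq hz, norm_div]
    _ ≤ 2 / ‖z - 1‖ := by
        gcongr
        calc ‖z ^ N - 1‖ ≤ ‖z ^ N‖ + ‖(1 : ℂ)‖ := norm_sub_le _ _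
          _ = 2 := by rw [norm_pow, hz_norm, one_pow, norm_one]; norm_num

theorem le_sin_mul_sin_add_sq (x y : ℝ) :
    1 / 8 + (cos (x - y) - cos (x + y)) / 2 + cos (2 * (x + y)) / 8 - cos (2 * x) / 4
      - cos (2 * y) / 4 ≤ sin x * sin y + (sin x * sin y) ^ 2 := by
  -- the difference of the two sides is `cos (x - y) ^ 2 / 4`
  have hx := sin_sq_add_cos_sq x
  have hy := sin_sq_add_cos_sq y
  rw [cos_sub, cos_add, cos_two_mul, cos_two_mul, cos_two_mul, cos_add]
  nlinarith [sq_nonneg (cos x * cos y + sin x * sin y)]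

theorem exists_sin_mul_sin_pos {a b : ℝ} (hsub : cos (a - b) ≠ 1) (hadd₂ : cos (2 * (a + b)) ≠ 1)
    (ha : cos (2 * a) ≠ 1) (hb : cos (2 * b) ≠ 1) (φ ψ : ℝ) :
    ∃ k : ℕ, 0 < sin (φ + k * a) * sin (ψ + k * b) := by
  by_contra! hF
  have hadd : cos (a + b) ≠ 1 := fun h => hadd₂ (by rw [cos_two_mul, h]; norm_num)
  have hpoint (k : ℕ) : 1 / 8 + (cos ((φ - ψ) + k * (a - b)) - cos ((φ + ψ) + k * (a + b))) / 2
      + cos (2 * (φ + ψ) + k * (2 * (a + b))) / 8 - cos (2 * φ + k * (2 * a)) / 4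
      - cos (2 * ψ + k * (2 * b)) / 4 ≤ 0 := by
    set x := φ + k * a
    set y := ψ + k * b
    have hprod : sin x * sin y + (sin x * sin y) ^ 2 ≤ 0 := by
      nlinarith [hF k, neg_one_le_sin x, sin_le_one x, neg_one_le_sin y, sin_le_one y,
        mul_nonneg (sub_nonneg.2 (neg_one_le_sin x)) (sub_nonneg.2 (neg_one_le_sin y)),
        mul_nonneg (sub_nonneg.2 (sin_le_one x)) (sub_nonneg.2 (sin_le_one y))]
    refine le_trans (le_of_eq ?_) ((le_sin_mul_sin_add_sq x y).trans hprod)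
    simp only [x, y]
    ring_nf
  let B : ℝ → ℝ := fun γ => 2 / ‖Complex.exp (γ * Complex.I) - 1‖
  obtain ⟨N, hN⟩ :=
    exists_nat_gt (4 * (B (a - b) + B (a + b)) + B (2 * (a + b)) + 2 * (B (2 * a) + B (2 * b)))
  have hsum := sum_nonpos fun k (_ : k ∈ range N) => hpoint k
  simp only [sum_add_distrib, sum_sub_distrib, ← sum_div, sum_const, card_range, nsmul_eq_mul,
    mul_one] at hsum
  have h₁ : |∑ k ∈ range N, cos ((φ - ψ) + k * (a - b))| ≤ B (a - b) :=
    abs_sum_range_cos_add_mul_le hsub _ N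
  have h₂ : |∑ k ∈ range N, cos ((φ + ψ) + k * (a + b))| ≤ B (a + b) :=
    abs_sum_range_cos_add_mul_le hadd _ N
  have h₃ : |∑ k ∈ range N, cos (2 * (φ + ψ) + k * (2 * (a + b)))| ≤ B (2 * (a + b)) :=
    abs_sum_range_cos_add_mul_le hadd₂ _ N
  have h₄ : |∑ k ∈ range N, cos (2 * φ + k * (2 * a))| ≤ B (2 * a) :=
    abs_sum_range_cos_add_mul_le ha _ N
  have h₅ : |∑ k ∈ range N, cos (2 * ψ + k * (2 * b))| ≤ B (2 * b) :=
    abs_sum_range_cos_add_mul_le hb _ N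
  linarith [(abs_le.1 h₁).1, (abs_le.1 h₂).2, (abs_le.1 h₃).1, (abs_le.1 h₄).2, (abs_le.1 h₅).2]

theorem re_mul_im_exp_mul_I_mul (μ : ℝ) (f : ℂ) :
    (Complex.exp (μ * Complex.I) * f).re * (Complex.exp (μ * Complex.I) * f).im
      = ‖f‖ ^ 2 * sin (2 * f.arg + 2 * μ) / 2 := by
  conv_lhs => rw [← Complex.norm_mul_exp_arg_mul_I f, mul_left_comm, ← Complex.exp_add,
    ← add_mul, ← Complex.ofReal_add]
  rw [Complex.re_ofReal_mul, Complex.im_ofReal_mul, Complex.exp_ofReal_mul_I_re,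
    Complex.exp_ofReal_mul_I_im, show 2 * f.arg + 2 * μ = 2 * (μ + f.arg) by ring, sin_two_mul]
  ring

theorem sameOrOppositeQuadrant_iff (z w : ℂ) :
    SameOrOppositeQuadrant z w ↔ 0 < (z.re * z.im) * (w.re * w.im) := by
  rw [show (z.re * z.im) * (w.re * w.im) = (z.re * w.re) * (z.im * w.im) by ring]
  exact mul_pos_iff.symm

/-- Lemma 4.5: for `0 < θ₁ < π/2 < θ₂ < π` with `θ₁ ≠ π - θ₂`, and nonzero vectors
`f₁, f₂` off the coordinate axes, some simultaneous rotation `R(kθ₁)f₁`, `R(kθ₂)f₂`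
puts them in the same open quadrant or in diametrically opposite ones. -/
theorem stmt10 (θ₁ θ₂ : ℝ) (h1 : 0 < θ₁) (h2 : θ₁ < π / 2) (h3 : π / 2 < θ₂)
    (h4 : θ₂ < π) (h5 : θ₁ ≠ π - θ₂)
    (f₁ f₂ : ℂ) (hf₁ : f₁.re ≠ 0 ∧ f₁.im ≠ 0) (hf₂ : f₂.re ≠ 0 ∧ f₂.im ≠ 0) :
    ∃ k : ℕ, SameOrOppositeQuadrant (Complex.exp ((k : ℝ) * θ₁ * Complex.I) * f₁)
      (Complex.exp ((k : ℝ) * θ₂ * Complex.I) * f₂) := by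
  have hf₁0 : f₁ ≠ 0 := fun h => hf₁.1 (by simp [h])
  have hf₂0 : f₂ ≠ 0 := fun h => hf₂.1 (by simp [h])
  have hπ := pi_pos
  obtain ⟨k, hk⟩ := exists_sin_mul_sin_pos (a := 2 * θ₁) (b := 2 * θ₂)
    (cos_ne_one_of_sub_int_mul_two_pi 0 (by push_cast; linarith) (by push_cast; linarith)
      (by push_cast; linarith))
    (cos_ne_one_of_sub_int_mul_two_pi 2 (by push_cast; linarith) (by push_cast; linarith)
      fun h => h5 (by push_cast at h; linarith))
    (cos_ne_one_of_sub_int_mul_two_pi 0 (by push_cast; linarith) (by push_cast; linarith)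
      (by push_cast; linarith))
    (cos_ne_one_of_sub_int_mul_two_pi 1 (by push_cast; linarith) (by push_cast; linarith)
      (by push_cast; linarith))
    (2 * f₁.arg) (2 * f₂.arg)
  refine ⟨k, (sameOrOppositeQuadrant_iff _ _).2 ?_⟩
  rw [← Complex.ofReal_mul, ← Complex.ofReal_mul, re_mul_im_exp_mul_I_mul,
    re_mul_im_exp_mul_I_mul, mul_left_comm 2 (k : ℝ) θ₁, mul_left_comm 2 (k : ℝ) θ₂]
  have hnorm : 0 < ‖f₁‖ ^ 2 * ‖f₂‖ ^ 2 / 4 := by positivity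
  linarith [mul_pos hnorm hk]
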